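/- Let A : ℝ → ℝ be continuously differentiable with A(x) ≤ −a₀ for some a₀ > 0 and all x ∈ ℝ, and with ∫_ℝ (1 + |t|)·|A′(t)| dt < ∞. If r₁, r₂ : ℝ → ℝ are two bounded differentiable functions with rᵢ(x) > 0 and rᵢ′(x) = A(x)/rᵢ(x) + 1 for all x ∈ ℝ (i = 1, 2), then r₁ = r₂. -/

import Mathlib

/-!
Two positive solutions `r₁, r₂` of `r' = A/r + 1` differ by `d = r₁ - r₂`, which solves the
linear equation `d' = c d` with `c = -A/(r₁ r₂) > 0`. Hence `d` never changes sign. If `d > 0`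
somewhere, then `r₂ < r₁ ≤ M` everywhere, so `c ≥ a₀/M²` and `d` grows exponentially,
contradicting `d < r₁ ≤ M`. By symmetry `r₁ = r₂`.
-/

open MeasureTheory Filter Real

section LinearODE

variable {c d : ℝ → ℝ}

theorem eq_mul_exp_integral_of_hasDerivAt_mul (hc : Continuous c)
    (hd : ∀ x, HasDerivAt d (c x * d x) x) (x₀ x : ℝ) :
    d x = d x₀ * exp (∫ t in x₀..x, c t) := by
  set F : ℝ → ℝ := fun y => ∫ t in x₀..y, c t
  have hF : ∀ y, HasDerivAt F (c y) y := fun y =>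
    (hc.integral_hasStrictDerivAt x₀ y).hasDerivAt
  have hconst : ∀ y, HasDerivAt (fun y => d y * exp (-F y)) 0 y := fun y =>
    ((hd y).mul (hF y).neg.exp).congr_deriv (by simp only [Pi.neg_apply]; ring)
  have h := is_const_of_deriv_eq_zero (fun y => (hconst y).differentiableAt)
    (fun y => (hconst y).deriv) x x₀
  simp only [F, intervalIntegral.integral_same, neg_zero, exp_zero, mul_one] at h
  rw [← h, mul_assoc, ← exp_add, neg_add_cancel, exp_zero, mul_one]

theorem mul_exp_le_of_hasDerivAt_mul {ε : ℝ} (hd : ∀ x, HasDerivAt d (c x * d x) x)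
    (hpos : ∀ x, 0 ≤ d x) (hcε : ∀ x, ε ≤ c x) {x₀ x : ℝ} (hx : x₀ ≤ x) :
    d x₀ * exp (ε * (x - x₀)) ≤ d x := by
  have hderiv : ∀ y, HasDerivAt (fun y => d y * exp (-(ε * y)))
      ((c y - ε) * d y * exp (-(ε * y))) y := fun y =>
    ((hd y).mul ((hasDerivAt_id' y).const_mul ε).neg.exp).congr_deriv
      (by simp only [Pi.neg_apply]; ring)
  have hmono := monotone_of_hasDerivAt_nonneg hderiv fun y =>
    mul_nonneg (mul_nonneg (sub_nonneg.2 (hcε y)) (hpos y)) (exp_pos _).le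
  calc d x₀ * exp (ε * (x - x₀)) = d x₀ * exp (-(ε * x₀)) * exp (ε * x) := by
        rw [mul_assoc, ← exp_add]; ring_nf
    _ ≤ d x * exp (-(ε * x)) * exp (ε * x) :=
        mul_le_mul_of_nonneg_right (hmono hx) (exp_pos _).le
    _ = d x := by rw [mul_assoc, ← exp_add, neg_add_cancel, exp_zero, mul_one]

end LinearODE

section Horizon

variable {A r₁ r₂ : ℝ → ℝ}

theorem hasDerivAt_sub_of_hasDerivAt_div_add_one {x : ℝ} (h₁ : r₁ x ≠ 0) (h₂ : r₂ x ≠ 0)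
    (h₁ode : HasDerivAt r₁ (A x / r₁ x + 1) x) (h₂ode : HasDerivAt r₂ (A x / r₂ x + 1) x) :
    HasDerivAt (fun y => r₁ y - r₂ y) (-A x / (r₁ x * r₂ x) * (r₁ x - r₂ x)) x := by
  refine (h₁ode.sub h₂ode).congr_deriv ?_
  field_simp
  ring

theorem le_of_hasDerivAt_div_add_one (hA : Continuous A) {a₀ M : ℝ} (ha₀ : 0 < a₀)
    (hAneg : ∀ x, A x ≤ -a₀) (h₁pos : ∀ x, 0 < r₁ x) (h₂pos : ∀ x, 0 < r₂ x)
    (h₁bdd : ∀ x, r₁ x ≤ M)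
    (h₁ode : ∀ x, HasDerivAt r₁ (A x / r₁ x + 1) x)
    (h₂ode : ∀ x, HasDerivAt r₂ (A x / r₂ x + 1) x) (x₀ : ℝ) :
    r₁ x₀ ≤ r₂ x₀ := by
  by_contra! h
  set d : ℝ → ℝ := fun y => r₁ y - r₂ y
  set c : ℝ → ℝ := fun y => -A y / (r₁ y * r₂ y)
  have hd : ∀ y, HasDerivAt d (c y * d y) y := fun y =>
    hasDerivAt_sub_of_hasDerivAt_div_add_one (h₁pos y).ne' (h₂pos y).ne' (h₁ode y) (h₂ode y)
  have hc : Continuous c :=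
    hA.neg.div ((Differentiable.continuous fun y => (h₁ode y).differentiableAt).mul
      (Differentiable.continuous fun y => (h₂ode y).differentiableAt))
      fun y => (mul_pos (h₁pos y) (h₂pos y)).ne'
  have hdpos : ∀ y, 0 < d y := fun y => by
    rw [eq_mul_exp_integral_of_hasDerivAt_mul hc hd x₀ y]
    exact mul_pos (sub_pos.2 h) (exp_pos _)
  have hM : 0 < M := (h₁pos x₀).trans_le (h₁bdd x₀)
  have hcε : ∀ y, a₀ / M ^ 2 ≤ c y := fun y => by
    have hr₂ : r₂ y ≤ M := by linarith [hdpos y, h₁bdd y]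
    exact div_le_div₀ (by linarith [hAneg y]) (by linarith [hAneg y])
      (mul_pos (h₁pos y) (h₂pos y))
      (by rw [sq]; exact mul_le_mul (h₁bdd y) hr₂ (h₂pos y).le hM.le)
  have hgrowth : Tendsto (fun y => d x₀ * exp (a₀ / M ^ 2 * (y - x₀))) atTop atTop :=
    (tendsto_exp_atTop.comp ((tendsto_id.atTop_add tendsto_const_nhds).const_mul_atTop
      (by positivity))).const_mul_atTop (hdpos x₀)
  obtain ⟨y, hyM, hy⟩ := ((hgrowth.eventually_gt_atTop M).and (eventually_ge_atTop x₀)).exists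
  have hle := mul_exp_le_of_hasDerivAt_mul hd (fun y => (hdpos y).le) hcε hy
  linarith [h₁bdd y, h₂pos y]

end Horizon

theorem acoustic_black_hole_horizon_unique (A : ℝ → ℝ) (hA : ContDiff ℝ 1 A)
    (a₀ : ℝ) (ha₀ : 0 < a₀) (hAneg : ∀ x, A x ≤ -a₀)
    (r₁ r₂ : ℝ → ℝ)
    (h₁pos : ∀ x, 0 < r₁ x) (h₂pos : ∀ x, 0 < r₂ x)
    (h₁bdd : ∃ M, ∀ x, r₁ x ≤ M) (h₂bdd : ∃ M, ∀ x, r₂ x ≤ M)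
    (h₁ode : ∀ x, HasDerivAt r₁ (A x / r₁ x + 1) x)
    (h₂ode : ∀ x, HasDerivAt r₂ (A x / r₂ x + 1) x) :
    r₁ = r₂ := by
  obtain ⟨M₁, hM₁⟩ := h₁bdd
  obtain ⟨M₂, hM₂⟩ := h₂bdd
  funext x
  exact le_antisymm
    (le_of_hasDerivAt_div_add_one hA.continuous ha₀ hAneg h₁pos h₂pos hM₁ h₁ode h₂ode x)
    (le_of_hasDerivAt_div_add_one hA.continuous ha₀ hAneg h₂pos h₁pos hM₂ h₂ode h₁ode x)
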